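/- For every a ≥ 0 and δ ≥ 0 there exists b ≥ 0 (depending only on a and δ) with the following property. Let X be a δ-hyperbolic geodesic metric space, let ζ be a geodesic segment in X, let x, y be points of X, let x' be a nearest point to x on ζ and y' a nearest point to y on ζ, and let σₓ be a geodesic segment with endpoints x, x' and σ_y a geodesic segment with endpoints y, y'. If the closed a-neighborhoods of σₓ and σ_y intersect (i.e., there is a point w ∈ X with dist(w, p) ≤ a for some p ∈ σₓ and dist(w, q) ≤ a for some q ∈ σ_y), then dist x' y' ≤ b. (Proposition 5.3(iv) of the paper, in the form in which it is applied: bounding the distance between the two nearest-point projections.) -/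

import Mathlib

/-- A subset `G` of a metric space is a geodesic segment with endpoints `x` and `y`
if it is the image of an isometric parametrization of a real interval `[a,b]`
with `γ a = x` and `γ b = y`. -/
def IsGeodesicSegmentBetween {X : Type*} [MetricSpace X] (G : Set X) (x y : X) : Prop :=
  ∃ (a b : ℝ) (γ : ℝ → X), a ≤ b ∧
    (∀ s ∈ Set.Icc a b, ∀ t ∈ Set.Icc a b, dist (γ s) (γ t) = |s - t|) ∧
    γ '' Set.Icc a b = G ∧ γ a = x ∧ γ b = y

/-- A geodesic segment is a geodesic segment between some pair of endpoints. -/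
def IsGeodesicSegment {X : Type*} [MetricSpace X] (G : Set X) : Prop :=
  ∃ x y : X, IsGeodesicSegmentBetween G x y

/-- A metric space is geodesic if any two points are the endpoints of some
geodesic segment. -/
def GeodesicMetricSpace (X : Type*) [MetricSpace X] : Prop :=
  ∀ x y : X, ∃ G : Set X, IsGeodesicSegmentBetween G x y

/-- `δ`-hyperbolicity via thin triangles: each side of any geodesic triangle is
contained in the closed `δ`-neighborhood of the union of the other two sides. -/
def IsDeltaHyperbolic (X : Type*) [MetricSpace X] (δ : ℝ) : Prop :=
  ∀ (x y z : X) (G₁ G₂ G₃ : Set X),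
    IsGeodesicSegmentBetween G₁ x y → IsGeodesicSegmentBetween G₂ y z →
      IsGeodesicSegmentBetween G₃ x z →
        (∀ p ∈ G₁, ∃ q ∈ G₂ ∪ G₃, dist p q ≤ δ) ∧
        (∀ p ∈ G₂, ∃ q ∈ G₁ ∪ G₃, dist p q ≤ δ) ∧
        (∀ p ∈ G₃, ∃ q ∈ G₁ ∪ G₂, dist p q ≤ δ)

/-- `a` is a nearest point to `x` on the subset `A`. -/
def IsNearestPointOn {X : Type*} [MetricSpace X] (x : X) (A : Set X) (a : X) : Prop :=
  a ∈ A ∧ ∀ p ∈ A, dist x a ≤ dist x p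


open Set Metric

lemma geod_mem_left {X : Type*} [MetricSpace X] {G : Set X} {x y : X}
    (h : IsGeodesicSegmentBetween G x y) : x ∈ G := by
  obtain ⟨a, b, γ, hab, _, him, hx, _⟩ := h
  rw [← him, ← hx]
  exact ⟨a, ⟨le_refl a, hab⟩, rfl⟩

lemma geod_mem_right {X : Type*} [MetricSpace X] {G : Set X} {x y : X}
    (h : IsGeodesicSegmentBetween G x y) : y ∈ G := by
  obtain ⟨a, b, γ, hab, _, him, _, hy⟩ := h
  rw [← him, ← hy]
  exact ⟨b, ⟨hab, le_refl b⟩, rfl⟩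

lemma geod_dist_add {X : Type*} [MetricSpace X] {G : Set X} {x y : X}
    (h : IsGeodesicSegmentBetween G x y) {v : X} (hv : v ∈ G) :
    dist x v + dist v y = dist x y := by
  obtain ⟨a, b, γ, hab, hiso, him, hx, hy⟩ := h
  rw [← him] at hv
  obtain ⟨t, ht, rfl⟩ := hv
  have ha : a ∈ Icc a b := ⟨le_refl a, hab⟩
  have hb : b ∈ Icc a b := ⟨hab, le_refl b⟩
  rw [← hx, ← hy, hiso a ha t ht, hiso t ht b hb, hiso a ha b hb,
    abs_of_nonpos (by linarith [ht.1] : a - t ≤ 0),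
    abs_of_nonpos (by linarith [ht.2] : t - b ≤ 0),
    abs_of_nonpos (by linarith : a - b ≤ 0)]
  ring

lemma geod_compact {X : Type*} [MetricSpace X] {G : Set X} {x y : X}
    (h : IsGeodesicSegmentBetween G x y) : IsCompact G := by
  obtain ⟨a, b, γ, hab, hiso, him, _, _⟩ := h
  rw [← him]
  apply isCompact_Icc.image_of_continuousOn
  have : LipschitzOnWith 1 γ (Icc a b) := by
    apply LipschitzOnWith.of_dist_le_mul
    intro s hs t ht
    rw [hiso s hs t ht]
    push_cast
    rw [one_mul, Real.dist_eq]
  exact this.continuousOn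

lemma geod_sub {X : Type*} [MetricSpace X] {G : Set X} (h : IsGeodesicSegment G)
    {u v : X} (hu : u ∈ G) (hv : v ∈ G) :
    ∃ G' : Set X, G' ⊆ G ∧ IsGeodesicSegmentBetween G' u v := by
  obtain ⟨x, y, a, b, γ, hab, hiso, him, hx, hy⟩ := h
  rw [← him] at hu hv
  obtain ⟨s, hs, rfl⟩ := hu
  obtain ⟨t, ht, rfl⟩ := hv
  rcases le_total s t with hst | hst
  · refine ⟨γ '' Icc s t, ?_, s, t, γ, hst, ?_, rfl, rfl, rfl⟩
    · rw [← him]; exact image_mono (f := γ) (Icc_subset_Icc hs.1 ht.2)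
    · intro s' hs' t' ht'
      exact hiso s' ⟨hs.1.trans hs'.1, hs'.2.trans ht.2⟩ t' ⟨hs.1.trans ht'.1, ht'.2.trans ht.2⟩
  · -- t ≤ s, reverse
    refine ⟨γ '' Icc t s, ?_, t, s, fun r => γ (s + t - r), hst, ?_, ?_, by simp, by simp⟩
    · rw [← him]; exact image_mono (f := γ) (Icc_subset_Icc ht.1 hs.2)
    · intro s' hs' t' ht'
      have h1 : s + t - s' ∈ Icc a b := ⟨by linarith [ht.1, hs'.2], by linarith [hs.2, hs'.1]⟩
      have h2 : s + t - t' ∈ Icc a b := ⟨by linarith [ht.1, ht'.2], by linarith [hs.2, ht'.1]⟩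
      rw [hiso _ h1 _ h2]
      rw [show s + t - s' - (s + t - t') = -(s' - t') by ring, abs_neg]
    · ext z
      constructor
      · rintro ⟨r, hr, rfl⟩
        exact ⟨s + t - r, ⟨by linarith [hr.2], by linarith [hr.1]⟩, by ring_nf⟩
      · rintro ⟨r, hr, rfl⟩
        exact ⟨s + t - r, ⟨by linarith [hr.2], by linarith [hr.1]⟩, by ring_nf⟩

lemma proj_quasi {X : Type*} [MetricSpace X] {δ : ℝ} (hδ : 0 ≤ δ)
    (hgeo : GeodesicMetricSpace X) (hhyp : IsDeltaHyperbolic X δ)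
    {ζ : Set X} (hζ : IsGeodesicSegment ζ)
    {p x' : X} (hx' : IsNearestPointOn p ζ x')
    {z : X} (hz : z ∈ ζ) :
    dist p x' + dist x' z ≤ dist p z + 4 * δ := by
  obtain ⟨G2, hG2sub, hG2⟩ := geod_sub hζ hx'.1 hz
  obtain ⟨G1, hG1⟩ := hgeo p x'
  obtain ⟨G3, hG3⟩ := hgeo p z
  have hthin := (hhyp p x' z G1 G2 G3 hG1 hG2 hG3).2.1
  obtain ⟨c, d, γ, hcd, hiso, him, hc, hd⟩ := hG2
  -- the set of parameters whose point is δ-close to G1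
  set S : Set ℝ := {t | t ∈ Icc c d ∧ infDist (γ t) G1 ≤ δ} with hS
  have hG1ne : G1.Nonempty := ⟨p, geod_mem_left hG1⟩
  have hG3ne : G3.Nonempty := ⟨p, geod_mem_left hG3⟩
  have hcS : c ∈ S := by
    refine ⟨⟨le_refl c, hcd⟩, ?_⟩
    have : infDist (γ c) G1 = 0 := by
      rw [hc]
      exact infDist_zero_of_mem (geod_mem_right hG1)
    rw [this]; exact hδ
  have hSbdd : BddAbove S := ⟨d, fun t ht => ht.1.2⟩
  set t₀ := sSup S with ht₀def
  have hct₀ : c ≤ t₀ := le_csSup hSbdd hcS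
  have ht₀d : t₀ ≤ d := csSup_le ⟨c, hcS⟩ (fun t ht => ht.1.2)
  have ht₀Icc : t₀ ∈ Icc c d := ⟨hct₀, ht₀d⟩
  -- m := γ t₀ is δ-close to both G1 and G3
  have hm1 : infDist (γ t₀) G1 ≤ δ := by
    apply le_of_forall_pos_le_add
    intro ε hε
    obtain ⟨t, htS, htlt⟩ := exists_lt_of_lt_csSup ⟨c, hcS⟩ (by linarith : t₀ - ε < t₀)
    have htle : t ≤ t₀ := le_csSup hSbdd htS
    calc infDist (γ t₀) G1 ≤ infDist (γ t) G1 + dist (γ t₀) (γ t) :=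
          infDist_le_infDist_add_dist
      _ ≤ δ + |t₀ - t| := by
          rw [hiso t₀ ht₀Icc t htS.1]
          exact add_le_add htS.2 le_rfl
      _ ≤ δ + ε := by
          rw [abs_of_nonneg (by linarith)]
          exact add_le_add le_rfl (by linarith)
  have hm3 : infDist (γ t₀) G3 ≤ δ := by
    rcases eq_or_lt_of_le ht₀d with heq | hlt
    · rw [heq, hd]
      have : infDist z G3 = 0 := infDist_zero_of_mem (geod_mem_right hG3)
      rw [this]; exact hδ
    · apply le_of_forall_pos_le_add
      intro ε hε
      set t := min (t₀ + ε) d with htdef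
      have htIcc : t ∈ Icc c d := ⟨le_min (by linarith) (hct₀.trans ht₀d), min_le_right _ _⟩
      have ht₀t : t₀ < t := lt_min (by linarith) hlt
      have htnS : t ∉ S := fun hmem => absurd (le_csSup hSbdd hmem) (not_le.mpr ht₀t)
      have hmemG2 : γ t ∈ G2 := him ▸ ⟨t, htIcc, rfl⟩
      obtain ⟨q, hq, hqd⟩ := hthin (γ t) hmemG2
      have hq3 : q ∈ G3 := by
        rcases hq with hq1 | hq3
        · exact absurd ⟨htIcc, (infDist_le_dist_of_mem hq1).trans hqd⟩ htnS
        · exact hq3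
      calc infDist (γ t₀) G3 ≤ infDist (γ t) G3 + dist (γ t₀) (γ t) :=
            infDist_le_infDist_add_dist
        _ ≤ δ + |t₀ - t| := by
            rw [hiso t₀ ht₀Icc t htIcc]
            exact add_le_add ((infDist_le_dist_of_mem hq3).trans hqd) le_rfl
        _ ≤ δ + ε := by
            rw [abs_of_nonpos (by linarith), neg_sub]
            have : t ≤ t₀ + ε := min_le_left _ _
            linarith
  -- extract the two close points
  obtain ⟨v, hv1, hvd⟩ := (geod_compact hG1).exists_infDist_eq_dist hG1ne (γ t₀)
  obtain ⟨v', hv3, hvd'⟩ := (geod_compact hG3).exists_infDist_eq_dist hG3ne (γ t₀)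
  have hmv : dist (γ t₀) v ≤ δ := hvd ▸ hm1
  have hmv' : dist (γ t₀) v' ≤ δ := hvd' ▸ hm3
  have hmζ : γ t₀ ∈ ζ := hG2sub (him ▸ ⟨t₀, ht₀Icc, rfl⟩)
  have hpm : dist p x' ≤ dist p (γ t₀) := hx'.2 _ hmζ
  have hv1' : dist p v + dist v x' = dist p x' := geod_dist_add hG1 hv1
  have hv3' : dist p v' + dist v' z = dist p z := geod_dist_add hG3 hv3
  have h1 : dist p (γ t₀) ≤ dist p v + dist v (γ t₀) := dist_triangle _ _ _
  have h2 : dist v (γ t₀) = dist (γ t₀) v := dist_comm _ _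
  -- dist v x' ≤ δ, so dist (γ t₀) x' ≤ 2δ
  have hvx : dist v x' ≤ δ := by linarith
  have hmx : dist (γ t₀) x' ≤ 2 * δ :=
    (dist_triangle (γ t₀) v x').trans (by linarith)
  have h3 : dist p (γ t₀) ≤ dist p v' + dist v' (γ t₀) := dist_triangle _ _ _
  have h4 : dist v' (γ t₀) = dist (γ t₀) v' := dist_comm _ _
  have h5 : dist x' z ≤ dist x' (γ t₀) + dist (γ t₀) z := dist_triangle _ _ _
  have h6 : dist x' (γ t₀) = dist (γ t₀) x' := dist_comm _ _
  have h7 : dist (γ t₀) z ≤ dist (γ t₀) v' + dist v' z := dist_triangle _ _ _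
  linarith

/-- Proposition 5.3(iv): there is `b = b(a, δ)` such that if the closed
`a`-neighborhoods of the geodesics `[x, x']` and `[y, y']` (from the points to
their nearest-point projections on a geodesic segment `ζ`) intersect, then
`dist x' y' ≤ b`. -/
theorem projections_close_of_nbhds_intersect :
    ∀ a δ : ℝ, 0 ≤ a → 0 ≤ δ → ∃ b : ℝ, 0 ≤ b ∧
      ∀ (X : Type*) [MetricSpace X], GeodesicMetricSpace X → IsDeltaHyperbolic X δ →
        ∀ ζ : Set X, IsGeodesicSegment ζ →
          ∀ x y x' y' : X, IsNearestPointOn x ζ x' → IsNearestPointOn y ζ y' →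
            ∀ σx σy : Set X,
              IsGeodesicSegmentBetween σx x x' → IsGeodesicSegmentBetween σy y y' →
              (∃ w : X, (∃ p ∈ σx, dist w p ≤ a) ∧ (∃ q ∈ σy, dist w q ≤ a)) →
              dist x' y' ≤ b := by
  intro a δ ha hδ
  refine ⟨2 * a + 4 * δ, by linarith, ?_⟩
  intro X _ hgeo hhyp ζ hζ x y x' y' hx' hy' σx σy hσx hσy ⟨w, ⟨p, hp, hwp⟩, ⟨q, hq, hwq⟩⟩
  -- x' is a nearest point of p on ζ
  have hpx' : IsNearestPointOn p ζ x' := by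
    refine ⟨hx'.1, fun z hz => ?_⟩
    have h1 : dist x p + dist p x' = dist x x' := geod_dist_add hσx hp
    have h2 : dist x x' ≤ dist x z := hx'.2 z hz
    have h3 : dist x z ≤ dist x p + dist p z := dist_triangle _ _ _
    linarith
  have hqy' : IsNearestPointOn q ζ y' := by
    refine ⟨hy'.1, fun z hz => ?_⟩
    have h1 : dist y q + dist q y' = dist y y' := geod_dist_add hσy hq
    have h2 : dist y y' ≤ dist y z := hy'.2 z hz
    have h3 : dist y z ≤ dist y q + dist q z := dist_triangle _ _ _
    linarith
  have key1 : dist p x' + dist x' y' ≤ dist p y' + 4 * δ :=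
    proj_quasi hδ hgeo hhyp hζ hpx' hy'.1
  have key2 : dist q y' + dist y' x' ≤ dist q x' + 4 * δ :=
    proj_quasi hδ hgeo hhyp hζ hqy' hx'.1
  have hpq : dist p q ≤ 2 * a := by
    have := dist_triangle p w q
    rw [dist_comm p w] at this
    linarith
  have t1 : dist p y' ≤ dist p q + dist q y' := dist_triangle _ _ _
  have t2 : dist q x' ≤ dist q p + dist p x' := dist_triangle _ _ _
  have e1 : dist q p = dist p q := dist_comm _ _
  have e2 : dist y' x' = dist x' y' := dist_comm _ _
  linarith
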